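/- arXiv:1205.1848 — 3 statements merged into one kernel-verified Lean document; each statement's English description precedes it below -/
import Mathlib

section
/- Let f : [0,1] → [0,1] be piecewise C¹ and suppose the Lebesgue measure μ on [0,1] is f-invariant (μ∘f⁻¹ = μ). Then the Perron–Frobenius identity ∑_{y : f(y)=x} 1/|f'(y)| = 1 holds for Lebesgue-a.e. x, and consequently |f'| ≥ 1 almost everywhere. -/
open MeasureTheory Set

noncomputable def pfDen (f : ℝ → ℝ) (u : Set ℝ) (x : ℝ) : ENNReal :=
  ∑' y : {y : ℝ // y ∈ u ∧ f y = x}, ENNReal.ofReal (1 / |deriv f (y : ℝ)|)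

lemma pfDen_apply_mem {f : ℝ → ℝ} {u : Set ℝ} (hinj : Set.InjOn f u) {y₀ : ℝ} (hy₀ : y₀ ∈ u) :
    pfDen f u (f y₀) = ENNReal.ofReal (1 / |deriv f y₀|) := by
  apply tsum_eq_single (⟨y₀, hy₀, rfl⟩ : {y : ℝ // y ∈ u ∧ f y = f y₀})
  intro b hb
  exact absurd (Subtype.ext (hinj b.2.1 hy₀ b.2.2)) hb

lemma pfDen_apply_not_mem {f : ℝ → ℝ} {u : Set ℝ} {x : ℝ} (hx : x ∉ f '' u) :
    pfDen f u x = 0 := by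
  have : IsEmpty {y : ℝ // y ∈ u ∧ f y = x} :=
    ⟨fun y => hx ⟨y, y.2.1, y.2.2⟩⟩
  exact tsum_empty

lemma pfDen_measurable {f : ℝ → ℝ} {u : Set ℝ} (hu : MeasurableSet u)
    (hcont : ContinuousOn f u) (hinj : Set.InjOn f u) :
    Measurable (pfDen f u) := by
  have hinj' : Function.Injective (u.restrict f) := (Set.injOn_iff_injective).1 hinj
  have he : MeasurableEmbedding (u.restrict f) := hcont.measurableEmbedding hu hinj
  have hφ : Measurable (fun y : u => ENNReal.ofReal (1 / |deriv f (y : ℝ)|)) := by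
    exact ((measurable_deriv f).comp measurable_subtype_coe).abs.const_div 1 |>.ennreal_ofReal
  have heq : pfDen f u = Function.extend (u.restrict f)
      (fun y : u => ENNReal.ofReal (1 / |deriv f (y : ℝ)|)) 0 := by
    funext x
    by_cases hx : x ∈ f '' u
    · obtain ⟨y₀, hy₀, rfl⟩ := hx
      rw [pfDen_apply_mem hinj hy₀,
        show f y₀ = u.restrict f ⟨y₀, hy₀⟩ from rfl, hinj'.extend_apply]
    · rw [pfDen_apply_not_mem hx, Function.extend_apply']
      · rfl
      · rintro ⟨y, hy⟩
        exact hx ⟨y, y.2, hy⟩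
  rw [heq]
  exact he.measurable_extend hφ measurable_const

lemma pfDen_setLIntegral {f : ℝ → ℝ} (hfm : Measurable f) {u : Set ℝ} (hu : MeasurableSet u)
    (hf' : ∀ y ∈ u, HasDerivAt f (deriv f y) y) (hinj : Set.InjOn f u)
    (hne : ∀ y ∈ u, deriv f y ≠ 0) {E : Set ℝ} (hE : MeasurableSet E) :
    ∫⁻ x in E, pfDen f u x = volume (u ∩ f ⁻¹' E) := by
  have hcont : ContinuousOn f u := fun y hy => (hf' y hy).continuousAt.continuousWithinAt
  have hfmeas : MeasurableSet (f '' u) := hu.image_of_continuousOn_injOn hcont hinj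
  set t := u ∩ f ⁻¹' E with ht_def
  have htsub : t ⊆ u := inter_subset_left
  have ht : MeasurableSet t := hu.inter (hfm hE)
  have hinjt : Set.InjOn f t := hinj.mono htsub
  have hf't : ∀ y ∈ t, HasFDerivWithinAt f
      ((1 : ℝ →L[ℝ] ℝ).smulRight (deriv f y)) t y :=
    fun y hy => ((hf' y (htsub hy)).hasDerivWithinAt).hasFDerivWithinAt
  have key := lintegral_image_eq_lintegral_abs_det_fderiv_mul volume ht hf't hinjt (pfDen f u)
  have himg : f '' t = E ∩ f '' u := by
    ext x
    constructor
    · rintro ⟨y, ⟨hyu, hyE⟩, rfl⟩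
      exact ⟨hyE, ⟨y, hyu, rfl⟩⟩
    · rintro ⟨hxE, ⟨y, hyu, rfl⟩⟩
      exact ⟨y, ⟨hyu, hxE⟩, rfl⟩
  have hRHS : ∫⁻ y in t, ENNReal.ofReal
      |((1 : ℝ →L[ℝ] ℝ).smulRight (deriv f y)).det| * pfDen f u (f y) = volume t := by
    rw [← setLIntegral_one t]
    apply setLIntegral_congr_fun ht
    intro y hy
    beta_reduce
    rw [ContinuousLinearMap.smulRight_one_eq_toSpanSingleton, ContinuousLinearMap.det_toSpanSingleton, pfDen_apply_mem hinj (htsub hy),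
      ← ENNReal.ofReal_mul (abs_nonneg _), mul_one_div, div_self, ENNReal.ofReal_one]
    exact abs_ne_zero.2 (hne y (htsub hy))
  have hsplit : ∫⁻ x in E, pfDen f u x = ∫⁻ x in f '' t, pfDen f u x := by
    rw [himg]
    have : ∀ x ∈ E, pfDen f u x = (E ∩ f '' u).indicator (pfDen f u) x := by
      intro x hx
      by_cases hxu : x ∈ f '' u
      · rw [Set.indicator_of_mem (show x ∈ E ∩ f '' u from ⟨hx, hxu⟩)]
      · rw [Set.indicator_of_notMem (fun h => hxu h.2), pfDen_apply_not_mem hxu]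
    rw [setLIntegral_congr_fun hE this,
      lintegral_indicator (hE.inter hfmeas),
      Measure.restrict_restrict (hE.inter hfmeas), Set.inter_eq_left.2 inter_subset_left]
  rw [hsplit, key, hRHS]

theorem perron_frobenius_identity (f : ℝ → ℝ) (hfm : Measurable f)
    (hmaps : Set.MapsTo f (Set.Icc 0 1) (Set.Icc 0 1))
    (r : ℕ) (hr : 0 < r) (a : Fin (r + 1) → ℝ) (ha : StrictMono a)
    (ha0 : a 0 = 0) (har : a (Fin.last r) = 1)
    (hC1 : ∀ i : Fin r, ∃ g : ℝ → ℝ, ContDiff ℝ 1 g ∧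
      Set.EqOn f g (Set.Icc (a i.castSucc) (a i.succ)))
    (hinv : Measure.map f (volume.restrict (Set.Icc 0 1))
      = volume.restrict (Set.Icc 0 1)) :
    (∀ᵐ x ∂(volume.restrict (Set.Icc (0:ℝ) 1)),
        (∑' y : {y : ℝ // y ∈ Set.Icc (0:ℝ) 1 ∧ f y = x}, 1 / |deriv f (y : ℝ)|) = 1)
    ∧ (∀ᵐ x ∂(volume.restrict (Set.Icc (0:ℝ) 1)), 1 ≤ |deriv f x|) := by
  classical
  set μ := volume.restrict (Set.Icc (0:ℝ) 1) with hμ_def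
  -- the C¹ pieces
  set g : Fin r → ℝ → ℝ := fun i => (hC1 i).choose with hg_def
  have hgC1 : ∀ i, ContDiff ℝ 1 (g i) := fun i => (hC1 i).choose_spec.1
  have hgeq : ∀ i, Set.EqOn f (g i) (Set.Icc (a i.castSucc) (a i.succ)) :=
    fun i => (hC1 i).choose_spec.2
  set O : Fin r → Set ℝ := fun i => Set.Ioo (a i.castSucc) (a i.succ) with hO_def
  have hOsub : ∀ i, O i ⊆ Set.Icc (0:ℝ) 1 := by
    intro i y hy
    have h1 : a 0 ≤ a i.castSucc := ha.monotone (Fin.zero_le _)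
    have h2 : a i.succ ≤ a (Fin.last r) := ha.monotone (Fin.le_last _)
    rw [ha0] at h1; rw [har] at h2
    exact ⟨le_of_lt (lt_of_le_of_lt h1 hy.1), le_of_lt (lt_of_lt_of_le hy.2 h2)⟩
  have hfg_nhds : ∀ i, ∀ y ∈ O i, f =ᶠ[nhds y] g i := by
    intro i y hy
    exact Filter.eventuallyEq_of_mem (isOpen_Ioo.mem_nhds hy)
      (fun z hz => hgeq i (Set.Ioo_subset_Icc_self hz))
  have hderiv_eq : ∀ i, ∀ y ∈ O i, deriv f y = deriv (g i) y :=
    fun i y hy => (hfg_nhds i y hy).deriv_eq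
  have hfd : ∀ i, ∀ y ∈ O i, HasDerivAt f (deriv f y) y := by
    intro i y hy
    have h1 : HasDerivAt (g i) (deriv (g i) y) y :=
      (((hgC1 i).differentiable one_ne_zero) y).hasDerivAt
    rw [hderiv_eq i y hy]
    exact ((hfg_nhds i y hy).hasDerivAt_iff).2 h1
  -- sets where the derivative is nonzero
  set V : Fin r → Set ℝ := fun i => O i ∩ {y | deriv (g i) y ≠ 0} with hV_def
  have hVopen : ∀ i, IsOpen (V i) := by
    intro i
    exact isOpen_Ioo.inter (isOpen_compl_singleton.preimage
      ((hgC1 i).continuous_deriv le_rfl))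
  set W : Set ℝ := ⋃ i, V i with hW_def
  set 𝒰 : Set (Set ℝ) := ⋃ i, (connectedComponentIn (V i) '' (V i)) with h𝒰_def
  have hmem𝒰 : ∀ u ∈ 𝒰, ∃ i, ∃ z ∈ V i, connectedComponentIn (V i) z = u := by
    intro u hu
    obtain ⟨i, hu'⟩ := Set.mem_iUnion.1 hu
    obtain ⟨z, hz, hzu⟩ := hu'
    exact ⟨i, z, hz, hzu⟩
  -- main facts about each u ∈ 𝒰
  have hu_all : ∀ u ∈ 𝒰, MeasurableSet u ∧ u ⊆ Set.Icc (0:ℝ) 1 ∧ Set.InjOn f u ∧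
      (∀ y ∈ u, HasDerivAt f (deriv f y) y) ∧ (∀ y ∈ u, deriv f y ≠ 0) ∧ ContinuousOn f u := by
    intro u hu
    obtain ⟨i, z, hz, rfl⟩ := hmem𝒰 u hu
    set u := connectedComponentIn (V i) z with hu_def
    have hopen : IsOpen u := (hVopen i).connectedComponentIn
    have hsubV : u ⊆ V i := connectedComponentIn_subset _ _
    have hsubO : u ⊆ O i := hsubV.trans inter_subset_left
    have hder : ∀ y ∈ u, HasDerivAt f (deriv f y) y := fun y hy => hfd i y (hsubO hy)
    have hne : ∀ y ∈ u, deriv f y ≠ 0 := fun y hy => by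
      rw [hderiv_eq i y (hsubO hy)]; exact (hsubV hy).2
    have hcont : ContinuousOn f u := fun y hy => (hder y hy).continuousAt.continuousWithinAt
    have hpre : IsPreconnected u := isPreconnected_connectedComponentIn
    have hconv : Convex ℝ u := hpre.ordConnected.convex
    have hzu : z ∈ u := mem_connectedComponentIn hz
    have hderiv_cont : ContinuousOn (deriv (g i)) u :=
      ((hgC1 i).continuous_deriv le_rfl).continuousOn
    have him : IsPreconnected (deriv (g i) '' u) := hpre.image _ hderiv_cont
    have hnot : (0:ℝ) ∉ deriv (g i) '' u := by
      rintro ⟨y, hy, h0⟩; exact (hsubV hy).2 h0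
    have hz' : deriv (g i) z ∈ deriv (g i) '' u := ⟨z, hzu, rfl⟩
    have hinj : Set.InjOn f u := by
      rcases (hsubV hzu).2.lt_or_gt with hneg | hpos
      · -- all derivatives negative
        have hall : ∀ y ∈ u, deriv f y < 0 := by
          intro y hy
          rw [hderiv_eq i y (hsubO hy)]
          by_contra h
          push_neg at h
          exact hnot (him.Icc_subset hz' ⟨y, hy, rfl⟩ ⟨hneg.le, h⟩)
        exact (strictAntiOn_of_deriv_neg hconv hcont
          (fun y hy => hall y (hopen.interior_eq ▸ hy))).injOn
      · -- all derivatives positive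
        have hall : ∀ y ∈ u, 0 < deriv f y := by
          intro y hy
          rw [hderiv_eq i y (hsubO hy)]
          by_contra h
          push_neg at h
          exact hnot (him.Icc_subset ⟨y, hy, rfl⟩ hz' ⟨h, hpos.le⟩)
        exact (strictMonoOn_of_deriv_pos hconv hcont
          (fun y hy => hall y (hopen.interior_eq ▸ hy))).injOn
    exact ⟨hopen.measurableSet, hsubO.trans (hOsub i), hinj, hder, hne, hcont⟩
  -- pairwise disjointness and countability
  have hOdisj : ∀ i j : Fin r, i ≠ j → Disjoint (O i) (O j) := by
    intro i j hij
    rcases lt_or_gt_of_ne hij with h | h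
    · refine Set.disjoint_left.2 fun y hyi hyj => ?_
      have hle : a i.succ ≤ a j.castSucc := ha.monotone (by
        rw [Fin.le_def]; simpa [Nat.succ_le_iff] using h)
      exact absurd (lt_of_lt_of_le hyi.2 hle) (not_lt.2 hyj.1.le)
    · refine Set.disjoint_left.2 fun y hyi hyj => ?_
      have hle : a j.succ ≤ a i.castSucc := ha.monotone (by
        rw [Fin.le_def]; simpa [Nat.succ_le_iff] using h)
      exact absurd (lt_of_lt_of_le hyj.2 hle) (not_lt.2 hyi.1.le)
  have hdisj : 𝒰.PairwiseDisjoint id := by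
    intro u hu v hv huv
    obtain ⟨i, z, hz, rfl⟩ := hmem𝒰 u hu
    obtain ⟨j, w, hw, rfl⟩ := hmem𝒰 v hv
    by_cases hij : i = j
    · subst hij
      rw [Function.onFun, Set.disjoint_left]
      intro y hy hy'
      exact huv ((connectedComponentIn_eq (show y ∈ connectedComponentIn (V i) z from hy)).trans
        (connectedComponentIn_eq (show y ∈ connectedComponentIn (V i) w from hy')).symm)
    · exact (hOdisj i j hij).mono
        ((connectedComponentIn_subset _ _).trans inter_subset_left)
        ((connectedComponentIn_subset _ _).trans inter_subset_left)
  have hcnt : 𝒰.Countable := by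
    apply hdisj.countable_of_isOpen
    · intro u hu
      obtain ⟨i, z, hz, rfl⟩ := hmem𝒰 u hu
      exact (hVopen i).connectedComponentIn
    · intro u hu
      obtain ⟨i, z, hz, rfl⟩ := hmem𝒰 u hu
      exact ⟨z, mem_connectedComponentIn hz⟩
  haveI : Countable ↥𝒰 := hcnt.to_subtype
  have hWU : ⋃₀ 𝒰 = W := by
    apply Set.Subset.antisymm
    · intro y hy
      obtain ⟨u, hu, hyu⟩ := hy
      obtain ⟨i, z, hz, rfl⟩ := hmem𝒰 u hu
      exact Set.mem_iUnion.2 ⟨i, connectedComponentIn_subset _ _ hyu⟩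
    · intro y hy
      obtain ⟨i, hyi⟩ := Set.mem_iUnion.1 hy
      exact ⟨connectedComponentIn (V i) y, Set.mem_iUnion.2 ⟨i, ⟨y, hyi, rfl⟩⟩,
        mem_connectedComponentIn hyi⟩
  -- covering of Icc 0 1 minus the partition points by the open pieces
  have hcover : ∀ y ∈ Set.Icc (0:ℝ) 1, y ∉ Set.range a → ∃ i : Fin r, y ∈ O i := by
    intro y hy hyP
    have h0 : a 0 ≤ y := by rw [ha0]; exact hy.1
    have hsne : (Finset.univ.filter (fun j : Fin (r+1) => a j ≤ y)).Nonempty :=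
      ⟨0, by simp [h0]⟩
    set j := (Finset.univ.filter (fun j : Fin (r+1) => a j ≤ y)).max' hsne with hj_def
    have hjle : a j ≤ y := by
      have := Finset.max'_mem _ hsne
      simpa using this
    have hjlast : j ≠ Fin.last r := by
      intro h
      apply hyP
      refine ⟨j, le_antisymm hjle ?_⟩
      rw [h, har]; exact hy.2
    have hjlt : (j : ℕ) < r := lt_of_le_of_ne (Nat.lt_succ_iff.mp j.isLt)
      (fun h => hjlast (Fin.ext h))
    set i : Fin r := ⟨j.val, hjlt⟩ with hi_def
    have hic : i.castSucc = j := Fin.ext rfl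
    have hlt : y < a i.succ := by
      by_contra h
      push_neg at h
      have hmem : i.succ ∈ Finset.univ.filter (fun j : Fin (r+1) => a j ≤ y) := by
        simp [h]
      have hle := Finset.le_max' _ _ hmem
      rw [← hj_def, ← hic] at hle
      exact absurd hle (not_le.2 (Fin.castSucc_lt_succ : i.castSucc < i.succ))
    have hgt : a i.castSucc < y := by
      rw [hic]
      exact lt_of_le_of_ne hjle (fun h => hyP ⟨j, h⟩)
    exact ⟨i, hgt, hlt⟩
  -- the bad set and its null image
  set C : Fin r → Set ℝ := fun i => O i ∩ {y | deriv (g i) y = 0} with hC_def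
  have hCnull : ∀ i, volume (f '' C i) = 0 := by
    intro i
    have himg : f '' C i = g i '' C i := by
      apply Set.image_congr
      intro y hy
      exact hgeq i (Set.Ioo_subset_Icc_self hy.1)
    rw [himg]
    apply addHaar_image_eq_zero_of_det_fderivWithin_eq_zero volume
      (f' := fun y => (1 : ℝ →L[ℝ] ℝ).smulRight (deriv (g i) y))
    · intro y _
      exact ((((hgC1 i).differentiable one_ne_zero) y).hasDerivAt.hasDerivWithinAt).hasFDerivWithinAt
    · intro y hy
      rw [ContinuousLinearMap.smulRight_one_eq_toSpanSingleton, ContinuousLinearMap.det_toSpanSingleton]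
      exact hy.2
  set B : Set ℝ := Set.Icc (0:ℝ) 1 \ W with hB_def
  have hBsub : B ⊆ Set.range a ∪ ⋃ i, C i := by
    intro y hy
    by_cases hyP : y ∈ Set.range a
    · exact Or.inl hyP
    · obtain ⟨i, hyi⟩ := hcover y hy.1 hyP
      right
      refine Set.mem_iUnion.2 ⟨i, hyi, ?_⟩
      by_contra hne
      exact hy.2 (Set.mem_iUnion.2 ⟨i, hyi, hne⟩)
  have hfBnull : volume (f '' B) = 0 := by
    have h1 : f '' B ⊆ f '' (Set.range a) ∪ ⋃ i, f '' C i := by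
      intro x hx
      obtain ⟨y, hy, rfl⟩ := hx
      rcases hBsub hy with h | h
      · exact Or.inl ⟨y, h, rfl⟩
      · obtain ⟨i, hyi⟩ := Set.mem_iUnion.1 h
        exact Or.inr (Set.mem_iUnion.2 ⟨i, ⟨y, hyi, rfl⟩⟩)
    refine measure_mono_null h1 (measure_union_null ?_ ?_)
    · exact Set.Countable.measure_zero ((Set.countable_range a).image f) _
    · exact measure_iUnion_null hCnull
  set Z : Set ℝ := toMeasurable volume (f '' B) with hZ_def
  have hZmeas : MeasurableSet Z := measurableSet_toMeasurable _ _
  have hZnull : volume Z = 0 := by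
    rw [hZ_def, measure_toMeasurable]; exact hfBnull
  have hZsub : f '' B ⊆ Z := subset_toMeasurable _ _
  -- invariance in concrete form
  have hmapE : ∀ E : Set ℝ, MeasurableSet E →
      volume (f ⁻¹' E ∩ Set.Icc (0:ℝ) 1) = volume (E ∩ Set.Icc (0:ℝ) 1) := by
    intro E hE
    have hmap := Measure.map_apply hfm hE (μ := μ)
    rw [hinv] at hmap
    rw [hμ_def] at hmap
    rw [Measure.restrict_apply' measurableSet_Icc, Measure.restrict_apply' measurableSet_Icc]
      at hmap
    exact hmap.symm
  -- the density N
  set N : ℝ → ENNReal := fun x => ∑' u : 𝒰, pfDen f u x with hN_def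
  have hNmeas : Measurable N := by
    apply Measurable.ennreal_tsum
    intro u
    obtain ⟨hmeas, _, hinj', _, _, hcont⟩ := hu_all u u.2
    exact pfDen_measurable hmeas hcont hinj'
  have hNint : ∀ E : Set ℝ, MeasurableSet E → E ⊆ Set.Icc (0:ℝ) 1 \ Z →
      ∫⁻ x in E, N x = volume E := by
    intro E hE hEsub
    have h1 : ∫⁻ x in E, N x = ∑' u : 𝒰, ∫⁻ x in E, pfDen f u x := by
      rw [hN_def]
      exact lintegral_tsum (fun u => by
        obtain ⟨hmeas, _, hinj', _, _, hcont⟩ := hu_all u u.2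
        exact (pfDen_measurable hmeas hcont hinj').aemeasurable)
    have h2 : ∀ u : 𝒰, ∫⁻ x in E, pfDen f u x = volume ((u : Set ℝ) ∩ f ⁻¹' E) := by
      intro u
      obtain ⟨hmeas, _, hinj', hder, hne, _⟩ := hu_all u u.2
      exact pfDen_setLIntegral hfm hmeas hder hinj' hne hE
    have h3 : volume (⋃ u ∈ 𝒰, (u ∩ f ⁻¹' E)) = ∑' u : 𝒰, volume ((u : Set ℝ) ∩ f ⁻¹' E) := by
      apply measure_biUnion hcnt
      · intro u hu v hv huv
        exact ((hdisj hu hv huv).mono inter_subset_left inter_subset_left)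
      · intro u hu
        exact (hu_all u hu).1.inter (hfm hE)
    have h4 : (⋃ u ∈ 𝒰, (u ∩ f ⁻¹' E)) = Set.Icc (0:ℝ) 1 ∩ f ⁻¹' E := by
      apply Set.Subset.antisymm
      · intro y hy
        obtain ⟨u, hu, hyu, hyE⟩ := Set.mem_iUnion₂.1 hy
        exact ⟨(hu_all u hu).2.1 hyu, hyE⟩
      · rintro y ⟨hyIcc, hyE⟩
        by_cases hyW : y ∈ W
        · have : y ∈ ⋃₀ 𝒰 := hWU ▸ hyW
          obtain ⟨u, hu, hyu⟩ := this
          exact Set.mem_iUnion₂.2 ⟨u, hu, hyu, hyE⟩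
        · exfalso
          have : f y ∈ Z := hZsub ⟨y, ⟨hyIcc, hyW⟩, rfl⟩
          exact (hEsub hyE).2 this
    rw [h1, tsum_congr h2, ← h3, h4, Set.inter_comm, hmapE E hE,
      Set.inter_eq_left.2 (fun x hx => (hEsub hx).1)]
  -- N = 1 a.e.
  have hTmeas : MeasurableSet (Set.Icc (0:ℝ) 1 \ Z) := measurableSet_Icc.diff hZmeas
  have hN1 : N =ᵐ[volume.restrict (Set.Icc (0:ℝ) 1 \ Z)] (fun _ => 1) := by
    apply ae_eq_of_forall_setLIntegral_eq_of_sigmaFinite hNmeas measurable_const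
    intro s hs _
    rw [Measure.restrict_restrict hs,
      hNint (s ∩ (Set.Icc (0:ℝ) 1 \ Z)) (hs.inter hTmeas) inter_subset_right,
      setLIntegral_one]
  have hN1' : ∀ᵐ x ∂μ, N x = 1 := by
    have hSmeas : MeasurableSet {x | ¬ N x = 1} := (hNmeas (measurableSet_singleton 1)).compl
    have h1 : volume ({x | ¬ N x = 1} ∩ (Set.Icc (0:ℝ) 1 \ Z)) = 0 := by
      have := hN1
      rw [Filter.EventuallyEq, ae_iff, Measure.restrict_apply hSmeas] at this
      exact this
    rw [ae_iff, hμ_def, Measure.restrict_apply hSmeas]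
    refine le_antisymm ?_ zero_le
    calc volume ({x | ¬ N x = 1} ∩ Set.Icc (0:ℝ) 1)
        ≤ volume (({x | ¬ N x = 1} ∩ (Set.Icc (0:ℝ) 1 \ Z)) ∪ Z) := by
          apply measure_mono
          rintro x ⟨hx1, hx2⟩
          by_cases hxZ : x ∈ Z
          · exact Or.inr hxZ
          · exact Or.inl ⟨hx1, hx2, hxZ⟩
      _ ≤ volume ({x | ¬ N x = 1} ∩ (Set.Icc (0:ℝ) 1 \ Z)) + volume Z := measure_union_le _ _
      _ = 0 := by rw [h1, hZnull, add_zero]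
  -- decomposition of the fiber sum
  have hdecomp : ∀ x : ℝ, x ∉ Z →
      (∑' y : {y : ℝ // y ∈ Set.Icc (0:ℝ) 1 ∧ f y = x},
        ENNReal.ofReal (1 / |deriv f (y : ℝ)|)) = N x := by
    intro x hx
    set A : Set ℝ := {y | y ∈ Set.Icc (0:ℝ) 1 ∧ f y = x} with hA_def
    have hAW : A ⊆ W := by
      intro y hy
      by_contra hyW
      exact hx (hZsub ⟨y, ⟨hy.1, hyW⟩, hy.2⟩)
    set F : ℝ → ENNReal := fun y => ENNReal.ofReal (1 / |deriv f y|) with hF_def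
    have h1 : (∑' y : A, F y) = ∑' y : ℝ, A.indicator F y := tsum_subtype A F
    have h2 : ∀ y : ℝ, A.indicator F y = ∑' u : 𝒰, ((u : Set ℝ) ∩ A).indicator F y := by
      intro y
      by_cases hy : y ∈ A
      · have hyW : y ∈ ⋃₀ 𝒰 := hWU ▸ hAW hy
        obtain ⟨u₀, hu₀, hyu₀⟩ := hyW
        have hother : ∀ b : ↥𝒰, b ≠ ⟨u₀, hu₀⟩ → ((b : Set ℝ) ∩ A).indicator F y = 0 := by
          intro b hb
          apply Set.indicator_of_notMem
          intro hyb
          have hbu : Disjoint (b : Set ℝ) u₀ := hdisj b.2 hu₀ (fun h => hb (Subtype.ext h))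
          exact Set.disjoint_left.1 hbu hyb.1 hyu₀
        rw [Set.indicator_of_mem hy, tsum_eq_single _ hother,
          Set.indicator_of_mem (show y ∈ (u₀ : Set ℝ) ∩ A from ⟨hyu₀, hy⟩)]
      · rw [Set.indicator_of_notMem hy]
        symm
        apply ENNReal.tsum_eq_zero.2
        intro u
        exact Set.indicator_of_notMem (fun h => hy h.2) _
    have h3 : (∑' y : A, F y) = ∑' u : 𝒰, ∑' y : ℝ, ((u : Set ℝ) ∩ A).indicator F y := by
      rw [h1, tsum_congr h2, ENNReal.tsum_comm]
    have h4 : ∀ u : 𝒰, (∑' y : ℝ, ((u : Set ℝ) ∩ A).indicator F y) = pfDen f u x := by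
      intro u
      rw [← tsum_subtype]
      have hsets : (u : Set ℝ) ∩ A = {y : ℝ | y ∈ (u : Set ℝ) ∧ f y = x} := by
        ext y
        constructor
        · rintro ⟨hyu, _, hyfx⟩
          exact ⟨hyu, hyfx⟩
        · rintro ⟨hyu, hyfx⟩
          exact ⟨hyu, ⟨(hu_all u u.2).2.1 hyu, hyfx⟩⟩
      rw [hsets]
      rfl
    calc (∑' y : {y : ℝ // y ∈ Set.Icc (0:ℝ) 1 ∧ f y = x},
          ENNReal.ofReal (1 / |deriv f (y : ℝ)|))
        = ∑' y : ↥A, F (y : ℝ) := rfl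
      _ = ∑' u : ↥𝒰, ∑' y : ℝ, ((u : Set ℝ) ∩ A).indicator F y := h3
      _ = ∑' u : ↥𝒰, pfDen f u x := tsum_congr h4
      _ = N x := rfl
  have hμZ : ∀ᵐ x ∂μ, x ∉ Z := by
    have : μ Z = 0 := le_antisymm (le_trans (Measure.restrict_le_self Z) hZnull.le) zero_le
    exact (measure_eq_zero_iff_ae_notMem.1 this)
  have Ekey : ∀ᵐ x ∂μ, (∑' y : {y : ℝ // y ∈ Set.Icc (0:ℝ) 1 ∧ f y = x},
      ENNReal.ofReal (1 / |deriv f (y : ℝ)|)) = 1 := by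
    filter_upwards [hμZ, hN1'] with x hxZ hxN
    rw [hdecomp x hxZ, hxN]
  constructor
  · -- first conjunct
    filter_upwards [Ekey] with x hx
    have h := congrArg ENNReal.toReal hx
    rw [ENNReal.tsum_toReal_eq (fun _ => ENNReal.ofReal_ne_top), ENNReal.toReal_one] at h
    calc (∑' y : {y : ℝ // y ∈ Set.Icc (0:ℝ) 1 ∧ f y = x}, 1 / |deriv f (y : ℝ)|)
        = ∑' y : {y : ℝ // y ∈ Set.Icc (0:ℝ) 1 ∧ f y = x},
            (ENNReal.ofReal (1 / |deriv f (y : ℝ)|)).toReal :=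
          tsum_congr fun y => (ENNReal.toReal_ofReal (one_div_nonneg.2 (abs_nonneg _))).symm
      _ = 1 := h
  · -- second conjunct
    set M : Set ℝ := toMeasurable μ {x | ¬ (∑' y : {y : ℝ // y ∈ Set.Icc (0:ℝ) 1 ∧ f y = x},
      ENNReal.ofReal (1 / |deriv f (y : ℝ)|)) = 1} with hM_def
    have hMmeas : MeasurableSet M := measurableSet_toMeasurable _ _
    have hMnull : μ M = 0 := by
      rw [hM_def, measure_toMeasurable]
      exact ae_iff.1 Ekey
    have hpreM : μ (f ⁻¹' M) = 0 := by
      have hmap := Measure.map_apply hfm hMmeas (μ := μ)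
      rw [hinv] at hmap
      rw [← hmap]
      exact hMnull
    set Z2 : Set ℝ := toMeasurable volume (f '' ⋃ i, C i) with hZ2_def
    have hZ2meas : MeasurableSet Z2 := measurableSet_toMeasurable _ _
    have hZ2null : volume Z2 = 0 := by
      rw [hZ2_def, measure_toMeasurable, Set.image_iUnion]
      exact measure_iUnion_null hCnull
    have hD0 : μ {y | deriv f y = 0} = 0 := by
      rw [hμ_def, Measure.restrict_apply' measurableSet_Icc]
      have hsub : {y | deriv f y = 0} ∩ Set.Icc (0:ℝ) 1
          ⊆ Set.range a ∪ (f ⁻¹' Z2 ∩ Set.Icc (0:ℝ) 1) := by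
        rintro y ⟨hy0, hyI⟩
        by_cases hyP : y ∈ Set.range a
        · exact Or.inl hyP
        · obtain ⟨i, hyi⟩ := hcover y hyI hyP
          have hyC : y ∈ C i := ⟨hyi, show deriv (g i) y = 0 by rw [← hderiv_eq i y hyi]; exact hy0⟩
          exact Or.inr ⟨subset_toMeasurable _ _ ⟨y, Set.mem_iUnion.2 ⟨i, hyC⟩, rfl⟩, hyI⟩
      refine measure_mono_null hsub (measure_union_null ?_ ?_)
      · exact Set.Countable.measure_zero (Set.countable_range a) _
      · rw [hmapE Z2 hZ2meas]
        exact measure_mono_null inter_subset_left hZ2null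
    have hae1 : ∀ᵐ y ∂μ, y ∈ Set.Icc (0:ℝ) 1 := ae_restrict_mem measurableSet_Icc
    have hae2 : ∀ᵐ y ∂μ, deriv f y ≠ 0 := by
      rw [ae_iff]
      convert hD0 using 2
      ext y
      simp [not_not]
    have hae3 : ∀ᵐ y ∂μ, f y ∉ M := by
      rw [ae_iff]
      convert hpreM using 2
      ext y
      simp [not_not]
    filter_upwards [hae1, hae2, hae3] with y hyI hy0 hyM
    have hP : (∑' z : {z : ℝ // z ∈ Set.Icc (0:ℝ) 1 ∧ f z = f y},
        ENNReal.ofReal (1 / |deriv f (z : ℝ)|)) = 1 := by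
      by_contra h
      exact hyM (subset_toMeasurable _ _ h)
    have hle : ENNReal.ofReal (1 / |deriv f y|) ≤ 1 := by
      rw [← hP]
      exact ENNReal.le_tsum (⟨y, hyI, rfl⟩ : {z : ℝ // z ∈ Set.Icc (0:ℝ) 1 ∧ f z = f y})
    have hle' : 1 / |deriv f y| ≤ 1 := by
      rwa [ENNReal.ofReal_le_one] at hle
    have hpos : 0 < |deriv f y| := abs_pos.2 hy0
    rwa [div_le_one hpos] at hle'
end

section
/- Let f be piecewise linear on [0,1] preserving Lebesgue measure, with |f'| = m constant on a subinterval containing the interval A = [ (n-1)/N, n/N ]. If f is increasing and linear on A, then the transition probabilities p(n'|n) = N·μ(f⁻¹(A^{(n')}) ∩ A) satisfy ∑_{n'} φ(p(n'|n)) = log m + (1/m)·φ(a) + (1/m)·φ(b), where a = 1 - {N·f((n-1)/N)} and b is the positive fractional part of N·f(n/N) (i.e. the value in (0,1] congruent to N·f(n/N) mod 1), with φ(t) = -t·log t. -/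
open MeasureTheory

noncomputable def phi (t : ℝ) : ℝ := -t * Real.log t

private lemma phi_zero : phi 0 = 0 := by simp [phi]

private lemma phi_one : phi 1 = 0 := by simp [phi]

set_option maxHeartbeats 2000000 in
theorem entropy_row_formula (N n : ℕ) (hN : 0 < N) (hn1 : 1 ≤ n) (hnN : n ≤ N)
    (f : ℝ → ℝ) (m : ℝ) (hm : 1 ≤ m)
    (hmaps : Set.MapsTo f (Set.Icc 0 1) (Set.Icc 0 1))
    (hlin : ∀ x ∈ Set.Icc (((n : ℝ) - 1) / N) ((n : ℝ) / N),
      f x = f (((n : ℝ) - 1) / N) + m * (x - ((n : ℝ) - 1) / N))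
    (A : ℕ → Set ℝ)
    (hA : ∀ k, A k = if k = N then Set.Icc (((k : ℝ) - 1) / N) 1
      else Set.Ico (((k : ℝ) - 1) / N) ((k : ℝ) / N))
    (p : ℕ → ℝ)
    (hp : ∀ n', p n' = (N : ℝ) * (volume (f ⁻¹' (A n') ∩ A n)).toReal)
    (aa bb : ℝ)
    (haa : aa = 1 - Int.fract ((N : ℝ) * f (((n : ℝ) - 1) / N)))
    (hbb : bb = if Int.fract ((N : ℝ) * f ((n : ℝ) / N)) = 0 then 1
      else Int.fract ((N : ℝ) * f ((n : ℝ) / N))) :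
    ∑ n' ∈ Finset.Icc 1 N, phi (p n')
      = Real.log m + phi aa / m + phi bb / m := by
  have hN' : (0:ℝ) < N := by exact_mod_cast hN
  have hm0 : (0:ℝ) < m := lt_of_lt_of_le one_pos hm
  have hNm : (0:ℝ) < (N:ℝ) * m := by positivity
  have hn1' : (1:ℝ) ≤ (n:ℝ) := by exact_mod_cast hn1
  have hnN' : (n:ℝ) ≤ (N:ℝ) := by exact_mod_cast hnN
  set s : ℝ := ((n:ℝ)-1)/N with hs
  set e : ℝ := (n:ℝ)/N with he
  have h0s : 0 ≤ s := by rw [hs]; apply div_nonneg (by linarith) hN'.le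
  have hse : s < e := by
    rw [hs, he, div_lt_div_iff₀ hN' hN']; nlinarith
  have he1 : e ≤ 1 := by rw [he, div_le_one hN']; exact hnN'
  have hsI : s ∈ Set.Icc (0:ℝ) 1 := ⟨h0s, le_trans hse.le he1⟩
  have heI : e ∈ Set.Icc (0:ℝ) 1 := ⟨le_trans h0s hse.le, he1⟩
  set c : ℝ := f s with hc
  have hc01 : c ∈ Set.Icc (0:ℝ) 1 := hmaps hsI
  have hfe : f e = c + m * (e - s) := hlin e ⟨hse.le, le_refl e⟩
  have hes : e - s = 1 / N := by rw [hs, he]; field_simp; ring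
  set u : ℝ := (N:ℝ) * c with hu
  set v : ℝ := (N:ℝ) * f e with hv
  have huv : v = u + m := by rw [hv, hfe, hes, hu]; field_simp; all_goals ring
  have hu0 : 0 ≤ u := mul_nonneg hN'.le hc01.1
  have hvN : v ≤ N := by
    have := (hmaps heI).2
    rw [hv]; nlinarith
  have hv1 : 1 ≤ v := by rw [huv]; linarith
  have hfs : c = f (((n:ℝ)-1)/N) := by rw [hc, hs]
  have hfe2 : (N:ℝ) * f ((n:ℝ)/N) = v := by rw [hv, he]
  clear_value s e c u v
  -- helper for scaling max
  have hNmax : ∀ X : ℝ, (N:ℝ) * max (X/((N:ℝ)*m)) 0 = max 0 X / m := by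
    intro X
    rcases le_total X 0 with h | h
    · have h1 : X/((N:ℝ)*m) ≤ 0 := div_nonpos_iff.mpr (Or.inr ⟨h, hNm.le⟩)
      rw [max_eq_right h1, max_eq_left h]
      simp
    · have h1 : 0 ≤ X/((N:ℝ)*m) := div_nonneg h hNm.le
      rw [max_eq_left h1, max_eq_right h]
      field_simp
  -- the key per-index formula
  have hpk : ∀ k : ℕ, p k = max 0 (min v (k:ℝ) - max u ((k:ℝ)-1)) / m := by
    intro k
    set α : ℝ := s + ((((k:ℝ)-1))/N - c)/m with hα
    set β : ℝ := s + (((k:ℝ))/N - c)/m with hβ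
    clear_value α β
    have hesu : e = s + 1/N := by linarith
    have hαs : α - s = (((k:ℝ)-1) - u)/((N:ℝ)*m) := by
      rw [hα, hu]; field_simp; all_goals ring
    have hβe : β - e = ((k:ℝ) - v)/((N:ℝ)*m) := by
      rw [hβ, hesu, huv, hu]; field_simp; all_goals ring
    have hβs : β - s = ((k:ℝ) - u)/((N:ℝ)*m) := by
      rw [hβ, hu]; field_simp; all_goals ring
    have heα : ∀ _ : True, e - α = (v - (((k:ℝ)-1)))/((N:ℝ)*m) := by
      intro _
      rw [hα, hesu, huv, hu]; field_simp; all_goals ring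
    have hβα : β - α = ((k:ℝ) - (((k:ℝ)-1)))/((N:ℝ)*m) := by
      rw [hα, hβ]; field_simp; all_goals ring
    have hes' : e - s = (v - u)/((N:ℝ)*m) := by
      rw [hesu, huv]; field_simp; all_goals ring
    have hfxlin : ∀ x ∈ Set.Ico s e, f x = c + m * (x - s) :=
      fun x hx => hlin x ⟨hx.1, hx.2.le⟩
    have hlow : ∀ x ∈ Set.Ico s e, ((((k:ℝ)-1))/(N:ℝ) ≤ f x ↔ α ≤ x) := by
      intro x hx
      rw [hfxlin x hx, hα]
      constructor
      · intro h
        rw [← le_sub_iff_add_le', div_le_iff₀ hm0]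
        linarith [mul_comm (x - s) m]
      · intro h
        rw [← le_sub_iff_add_le', div_le_iff₀ hm0] at h
        linarith [mul_comm (x - s) m]
    have hhigh : ∀ x ∈ Set.Ico s e, (f x < ((k:ℝ))/(N:ℝ) ↔ x < β) := by
      intro x hx
      rw [hfxlin x hx, hβ]
      constructor
      · intro h
        rw [← sub_lt_iff_lt_add', lt_div_iff₀ hm0]
        linarith [mul_comm (x - s) m]
      · intro h
        rw [← sub_lt_iff_lt_add', lt_div_iff₀ hm0] at h
        linarith [mul_comm (x - s) m]
    have hvol1 : volume (f ⁻¹' (A k) ∩ Set.Ico s e)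
        = ENNReal.ofReal (min e β - max s α) := by
      by_cases hkN : k = N
      · have hset : f ⁻¹' (A k) ∩ Set.Ico s e = Set.Ico (max s α) e := by
          ext x
          simp only [Set.mem_inter_iff, Set.mem_preimage, hA k, if_pos hkN,
            Set.mem_Icc, Set.mem_Ico, max_le_iff]
          constructor
          · rintro ⟨⟨h1, _⟩, hx1, hx2⟩
            exact ⟨⟨hx1, (hlow x ⟨hx1, hx2⟩).mp h1⟩, hx2⟩
          · rintro ⟨⟨hx1, hαx⟩, hx2⟩
            refine ⟨⟨(hlow x ⟨hx1, hx2⟩).mpr hαx, ?_⟩, hx1, hx2⟩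
            exact (hmaps ⟨le_trans h0s hx1, le_trans hx2.le he1⟩).2
        rw [hset, Real.volume_Ico]
        congr 1
        have heβ : e ≤ β := by
          have hkN' : (k:ℝ) = (N:ℝ) := by rw [hkN]
          have h1 : (0:ℝ) ≤ ((k:ℝ) - v)/((N:ℝ)*m) :=
            div_nonneg (by rw [hkN']; linarith) hNm.le
          linarith
        rw [min_eq_left heβ]
      · have hset : f ⁻¹' (A k) ∩ Set.Ico s e
            = Set.Ico (max s α) (min e β) := by
          ext x
          simp only [Set.mem_inter_iff, Set.mem_preimage, hA k, if_neg hkN,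
            Set.mem_Ico, max_le_iff, lt_min_iff]
          constructor
          · rintro ⟨⟨h1, h2⟩, hx1, hx2⟩
            exact ⟨⟨hx1, (hlow x ⟨hx1, hx2⟩).mp h1⟩, hx2, (hhigh x ⟨hx1, hx2⟩).mp h2⟩
          · rintro ⟨⟨hx1, hαx⟩, hx2, hβx⟩
            exact ⟨⟨(hlow x ⟨hx1, hx2⟩).mpr hαx, (hhigh x ⟨hx1, hx2⟩).mpr hβx⟩, hx1, hx2⟩
        rw [hset, Real.volume_Ico]
    have hvoln : volume (f ⁻¹' (A k) ∩ A n)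
        = volume (f ⁻¹' (A k) ∩ Set.Ico s e) := by
      by_cases hnN2 : n = N
      · rw [hA n, if_pos hnN2, ← hs]
        have he1' : e = 1 := by rw [he, hnN2]; field_simp
        apply le_antisymm
        · calc volume (f ⁻¹' (A k) ∩ Set.Icc s 1)
              ≤ volume ((f ⁻¹' (A k) ∩ Set.Ico s e) ∪ {(1:ℝ)}) := by
                apply measure_mono
                rintro x ⟨hx1, hx2, hx3⟩
                rcases lt_or_eq_of_le hx3 with h | h
                · exact Or.inl ⟨hx1, hx2, by rw [he1']; exact h⟩
                · exact Or.inr (by simp [h])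
            _ ≤ volume (f ⁻¹' (A k) ∩ Set.Ico s e) + volume {(1:ℝ)} :=
                measure_union_le _ _
            _ = volume (f ⁻¹' (A k) ∩ Set.Ico s e) := by simp
        · apply measure_mono
          rintro x ⟨hx1, hx2⟩
          exact ⟨hx1, hx2.1, by rw [← he1']; exact hx2.2.le⟩
      · rw [hA n, if_neg hnN2, ← hs, ← he]
    rw [hp k, hvoln, hvol1, ENNReal.toReal_ofReal']
    rcases le_total v (k:ℝ) with hvk | hvk
    · have h1 : e ≤ β := by
        have : (0:ℝ) ≤ ((k:ℝ) - v)/((N:ℝ)*m) := div_nonneg (by linarith) hNm.le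
        linarith
      rw [min_eq_left h1, min_eq_left hvk]
      rcases le_total u ((k:ℝ)-1) with huk | huk
      · have h2 : s ≤ α := by
          have : (0:ℝ) ≤ (((k:ℝ)-1) - u)/((N:ℝ)*m) := div_nonneg (by linarith) hNm.le
          linarith
        rw [max_eq_right h2, max_eq_right huk]
        rw [show e - α = (v - (((k:ℝ)-1)))/((N:ℝ)*m) from heα trivial]
        exact hNmax _
      · have h2 : α ≤ s := by
          have : (((k:ℝ)-1) - u)/((N:ℝ)*m) ≤ 0 :=
            div_nonpos_iff.mpr (Or.inr ⟨by linarith, hNm.le⟩)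
          linarith
        rw [max_eq_left h2, max_eq_left huk]
        rw [show e - s = (v - u)/((N:ℝ)*m) from hes']
        exact hNmax _
    · have h1 : β ≤ e := by
        have : ((k:ℝ) - v)/((N:ℝ)*m) ≤ 0 :=
          div_nonpos_iff.mpr (Or.inr ⟨by linarith, hNm.le⟩)
        linarith
      rw [min_eq_right h1, min_eq_right hvk]
      rcases le_total u ((k:ℝ)-1) with huk | huk
      · have h2 : s ≤ α := by
          have : (0:ℝ) ≤ (((k:ℝ)-1) - u)/((N:ℝ)*m) := div_nonneg (by linarith) hNm.le
          linarith
        rw [max_eq_right h2, max_eq_right huk]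
        rw [show β - α = ((k:ℝ) - (((k:ℝ)-1)))/((N:ℝ)*m) from hβα]
        exact hNmax _
      · have h2 : α ≤ s := by
          have : (((k:ℝ)-1) - u)/((N:ℝ)*m) ≤ 0 :=
            div_nonpos_iff.mpr (Or.inr ⟨by linarith, hNm.le⟩)
          linarith
        rw [max_eq_left h2, max_eq_left huk]
        rw [show β - s = ((k:ℝ) - u)/((N:ℝ)*m) from hβs]
        exact hNmax _
  -- Step 2: summation
  set K1 : ℕ := (⌊u⌋).toNat + 1 with hK1def
  set K2 : ℕ := (⌈v⌉).toNat with hK2def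
  have hfl0 : (0:ℤ) ≤ ⌊u⌋ := Int.floor_nonneg.mpr hu0
  have hcl0 : (0:ℤ) ≤ ⌈v⌉ := Int.ceil_nonneg (by linarith : (0:ℝ) ≤ v)
  have hK1r : (K1 : ℝ) = (⌊u⌋ : ℝ) + 1 := by
    have hz : (K1 : ℤ) = ⌊u⌋ + 1 := by rw [hK1def]; push_cast; omega
    exact_mod_cast hz
  have hK2r : (K2 : ℝ) = (⌈v⌉ : ℝ) := by
    have hz : (K2 : ℤ) = ⌈v⌉ := by rw [hK2def]; push_cast; omega
    exact_mod_cast hz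
  have hK1a : (K1:ℝ) - 1 ≤ u := by rw [hK1r]; linarith [Int.floor_le u]
  have hK1b : u < (K1:ℝ) := by rw [hK1r]; linarith [Int.lt_floor_add_one u]
  have hK2a : v ≤ (K2:ℝ) := by rw [hK2r]; exact Int.le_ceil v
  have hK2b : (K2:ℝ) - 1 < v := by rw [hK2r]; linarith [Int.ceil_lt_add_one v]
  have hK1K2 : K1 ≤ K2 := by
    have h : (K1:ℝ) ≤ (K2:ℝ) := by linarith [huv]
    exact_mod_cast h
  have hK2N : K2 ≤ N := by
    have h : (K2:ℝ) ≤ (N:ℝ) := by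
      rw [hK2r]
      have : (⌈v⌉ : ℤ) ≤ (N : ℤ) := Int.ceil_le.mpr (by exact_mod_cast hvN)
      exact_mod_cast this
    exact_mod_cast h
  have hK11 : 1 ≤ K1 := by rw [hK1def]; omega
  have haa2 : aa = (K1:ℝ) - u := by
    rw [haa, hK1r]
    have := Int.floor_add_fract u
    linarith
  have haapos : 0 < aa := by rw [haa2]; linarith
  have hbb2 : bb = v - (K2:ℝ) + 1 := by
    rw [hbb, hK2r]
    by_cases hfv : Int.fract v = 0
    · rw [if_pos hfv]
      have h1 : v = ((⌊v⌋:ℤ):ℝ) := by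
        have := Int.floor_add_fract v; rw [hfv] at this; linarith
      rw [h1, Int.ceil_intCast]
      ring
    · rw [if_neg hfv]
      have := Int.ceil_eq_add_one_sub_fract hfv
      linarith
  have hbbpos : 0 < bb := by rw [hbb2]; linarith
  have hsum1 : ∑ n' ∈ Finset.Icc 1 N, phi (p n') = ∑ k ∈ Finset.Icc K1 K2, phi (p k) := by
    refine (Finset.sum_subset (Finset.Icc_subset_Icc hK11 hK2N) ?_).symm
    intro k hk hk2
    simp only [Finset.mem_Icc] at hk hk2
    have hk' : k < K1 ∨ K2 < k := by omega
    have hzero : max 0 (min v (k:ℝ) - max u ((k:ℝ)-1)) = 0 := by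
      apply max_eq_left
      rcases hk' with h | h
      · have h1 : (k:ℝ) + 1 ≤ (K1:ℝ) := by exact_mod_cast Nat.succ_le_of_lt h
        linarith [min_le_right v (k:ℝ), le_max_left u ((k:ℝ)-1)]
      · have h1 : (K2:ℝ) + 1 ≤ (k:ℝ) := by exact_mod_cast Nat.succ_le_of_lt h
        linarith [min_le_left v (k:ℝ), le_max_right u ((k:ℝ)-1)]
    rw [hpk k, hzero]
    simp [phi]
  rw [hsum1]
  rcases eq_or_lt_of_le hK1K2 with heq | hlt
  · -- degenerate case : m = 1
    rw [← heq, Finset.Icc_self, Finset.sum_singleton]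
    have hKr : (K1:ℝ) = (K2:ℝ) := by rw [heq]
    have hm1 : m = 1 := by linarith [huv]
    have hveq : v = (K1:ℝ) := by linarith [huv]
    have hueq : u = (K1:ℝ) - 1 := by linarith
    have hp1 : p K1 = 1 := by
      rw [hpk K1, hveq, hueq, min_self, max_self, hm1]
      have h3 : (K1:ℝ) - ((K1:ℝ) - 1) = 1 := by ring
      rw [h3]
      norm_num
    have haa1 : aa = 1 := by rw [haa2]; linarith
    have hbb1 : bb = 1 := by rw [hbb2]; linarith
    rw [hp1, haa1, hbb1, hm1]
    simp [phi]
  · have hlt' : (K1:ℝ) + 1 ≤ (K2:ℝ) := by exact_mod_cast Nat.succ_le_of_lt hlt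
    have hsplit : Finset.Icc K1 K2 = insert K1 (insert K2 (Finset.Ioo K1 K2)) := by
      ext x
      simp only [Finset.mem_Icc, Finset.mem_insert, Finset.mem_Ioo]
      omega
    rw [hsplit, Finset.sum_insert (by simp only [Finset.mem_insert, Finset.mem_Ioo]; omega),
      Finset.sum_insert (by simp only [Finset.mem_Ioo]; omega)]
    have hconst : ∀ k ∈ Finset.Ioo K1 K2, phi (p k) = Real.log m / m := by
      intro k hk
      simp only [Finset.mem_Ioo] at hk
      have h1 : (k:ℝ) + 1 ≤ (K2:ℝ) := by exact_mod_cast Nat.succ_le_of_lt hk.2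
      have h2 : (K1:ℝ) + 1 ≤ (k:ℝ) := by exact_mod_cast Nat.succ_le_of_lt hk.1
      have hminv : min v (k:ℝ) = (k:ℝ) := min_eq_right (by linarith)
      have hmaxu : max u ((k:ℝ)-1) = (k:ℝ)-1 := max_eq_right (by linarith)
      rw [hpk k, hminv, hmaxu]
      have h3 : (k:ℝ) - ((k:ℝ) - 1) = 1 := by ring
      rw [h3, max_eq_right zero_le_one]
      simp only [phi]
      rw [Real.log_div one_ne_zero hm0.ne', Real.log_one]
      ring
    rw [Finset.sum_congr rfl hconst, Finset.sum_const, Nat.card_Ioo, nsmul_eq_mul]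
    have hpK1 : p K1 = aa / m := by
      rw [hpk K1, min_eq_right (by linarith [huv] : (K1:ℝ) ≤ v),
        max_eq_left hK1a, max_eq_right (by linarith : (0:ℝ) ≤ (K1:ℝ) - u), haa2]
    have hpK2 : p K2 = bb / m := by
      rw [hpk K2, min_eq_left hK2a,
        max_eq_right (by linarith [huv] : u ≤ (K2:ℝ) - 1),
        max_eq_right (by linarith : (0:ℝ) ≤ v - ((K2:ℝ) - 1))]
      have h4 : v - ((K2:ℝ) - 1) = bb := by rw [hbb2]; ring
      rw [h4]
    rw [hpK1, hpK2]
    have hcard : ((K2 - K1 - 1 : ℕ) : ℝ) = m - aa - bb := by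
      have h2 : ((K2 - K1 - 1 : ℕ) : ℝ) = (K2:ℝ) - (K1:ℝ) - 1 := by
        rw [Nat.sub_sub, Nat.cast_sub (by omega)]
        push_cast; ring
      rw [h2, haa2, hbb2]
      linarith [huv]
    rw [hcard]
    have hlogaa : phi (aa / m) = (aa * Real.log m - aa * Real.log aa)/m := by
      simp only [phi]
      rw [Real.log_div haapos.ne' hm0.ne']
      field_simp; all_goals ring
    have hlogbb : phi (bb / m) = (bb * Real.log m - bb * Real.log bb)/m := by
      simp only [phi]
      rw [Real.log_div hbbpos.ne' hm0.ne']
      field_simp; all_goals ring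
    rw [hlogaa, hlogbb]
    simp only [phi]
    field_simp
    ring
end

section
/- Under the assumptions of the previous conjugacy result, the fine-graining limits H̄(f) = limsup_{‖Δ‖→0} H_Δ(f) and H̲(f) = liminf_{‖Δ‖→0} H_Δ(f), where the limit is over equivolume partitions Δ with ‖Δ‖ = 1/N → 0, are invariants under topological conjugacy: if g = C∘f∘C⁻¹ for a homeomorphism C of [0,1], then H̄(f) = H̄(g) and H̲(f) = H̲(g). -/
open MeasureTheory Filter

/-- The set of Shannon entropy values `H_Δ(T)` over all equivolume partitions `Δ`
of `[0,1]` into `N` subintervals of `μ`-measure `1/N`. -/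
def Hset (T : Set.Icc (0:ℝ) 1 → Set.Icc (0:ℝ) 1)
    (μ : Measure (Set.Icc (0:ℝ) 1)) (N : ℕ) : Set ℝ :=
  {x | ∃ A : Fin N → Set (Set.Icc (0:ℝ) 1),
    (∀ n, MeasurableSet (A n)) ∧ Pairwise (Function.onFun Disjoint A) ∧
    (⋃ n, A n) = Set.univ ∧ (∀ n, Set.OrdConnected (A n)) ∧
    (∀ n, μ (A n) = 1 / N) ∧
    x = ∑ n, ∑ n', (1 / (N : ℝ)) * phi ((N : ℝ) * (μ (T ⁻¹' (A n') ∩ A n)).toReal)}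

lemma Hset_conj_subset
    (f : Set.Icc (0:ℝ) 1 → Set.Icc (0:ℝ) 1) (hfm : Measurable f)
    (μ : Measure (Set.Icc (0:ℝ) 1))
    (C : Set.Icc (0:ℝ) 1 ≃ₜ Set.Icc (0:ℝ) 1)
    (g : Set.Icc (0:ℝ) 1 → Set.Icc (0:ℝ) 1) (hg : g = C ∘ f ∘ C.symm)
    (N : ℕ) : Hset g (μ.map C) N ⊆ Hset f μ N := by
  rintro x ⟨A, hAm, hAd, hAu, hAo, hAμ, hxs⟩
  have hCm : Measurable (C : Set.Icc (0:ℝ) 1 → Set.Icc (0:ℝ) 1) := C.continuous.measurable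
  have hgm : Measurable g := by
    rw [hg]; exact hCm.comp (hfm.comp C.symm.continuous.measurable)
  haveI : Inhabited (Set.Icc (0:ℝ) 1) := ⟨⟨0, by norm_num⟩⟩
  have hmono : StrictMono (C : Set.Icc (0:ℝ) 1 → Set.Icc (0:ℝ) 1)
      ∨ StrictAnti (C : Set.Icc (0:ℝ) 1 → Set.Icc (0:ℝ) 1) :=
    C.continuous.strictMono_of_inj_boundedOrder' C.injective
  refine ⟨fun n => (C : Set.Icc (0:ℝ) 1 → Set.Icc (0:ℝ) 1) ⁻¹' A n,
    fun n => (hAm n).preimage hCm, fun n n' hnn => (hAd hnn).preimage _, ?_, ?_, ?_, ?_⟩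
  · rw [← Set.preimage_iUnion, hAu, Set.preimage_univ]
  · intro n
    rcases hmono with h | h
    · exact (hAo n).preimage_mono h.monotone
    · exact (hAo n).preimage_anti h.antitone
  · intro n
    rw [← hAμ n, Measure.map_apply hCm (hAm n)]
  · rw [hxs]
    congr 1; ext n
    congr 1; ext n'
    congr 3
    rw [Measure.map_apply hCm ((hgm (hAm n')).inter (hAm n)), Set.preimage_inter]
    congr 2
    rw [← Set.preimage_comp, hg]
    have : (C ∘ f ∘ C.symm) ∘ (C : Set.Icc (0:ℝ) 1 → Set.Icc (0:ℝ) 1)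
        = (C : Set.Icc (0:ℝ) 1 → Set.Icc (0:ℝ) 1) ∘ f := by
      ext y; simp
    rw [this, Set.preimage_comp]

theorem fine_graining_limits_conjugacy_invariant
    (f : Set.Icc (0:ℝ) 1 → Set.Icc (0:ℝ) 1)
    (μ : Measure (Set.Icc (0:ℝ) 1)) [IsProbabilityMeasure μ]
    (hac : μ ≪ (volume : Measure (Set.Icc (0:ℝ) 1)))
    (herg : Ergodic f μ)
    (huniq : ∀ μ' : Measure (Set.Icc (0:ℝ) 1), IsProbabilityMeasure μ' →
      μ' ≪ (volume : Measure (Set.Icc (0:ℝ) 1)) → Ergodic f μ' → μ' = μ)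
    (C : Set.Icc (0:ℝ) 1 ≃ₜ Set.Icc (0:ℝ) 1)
    (g : Set.Icc (0:ℝ) 1 → Set.Icc (0:ℝ) 1) (hg : g = C ∘ f ∘ C.symm)
    (ν : Measure (Set.Icc (0:ℝ) 1)) (hν : ν = μ.map C) :
    limsup (fun N : ℕ => sSup (Hset f μ N)) atTop
      = limsup (fun N : ℕ => sSup (Hset g ν N)) atTop
    ∧ liminf (fun N : ℕ => sInf (Hset f μ N)) atTop
      = liminf (fun N : ℕ => sInf (Hset g ν N)) atTop := by
  have hfm : Measurable f := herg.toMeasurePreserving.measurable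
  have hgm : Measurable g := by
    rw [hg]
    exact C.continuous.measurable.comp (hfm.comp C.symm.continuous.measurable)
  have hμν : μ = ν.map C.symm := by
    rw [hν, Measure.map_map C.symm.continuous.measurable C.continuous.measurable]
    have : (C.symm : Set.Icc (0:ℝ) 1 → Set.Icc (0:ℝ) 1)
        ∘ (C : Set.Icc (0:ℝ) 1 → Set.Icc (0:ℝ) 1) = id := by ext y; simp
    rw [this, Measure.map_id]
  have hfg : f = C.symm ∘ g ∘ C.symm.symm := by
    ext y; simp [hg]
  have key : ∀ N : ℕ, Hset f μ N = Hset g ν N := by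
    intro N
    apply Set.Subset.antisymm
    · rw [hμν]
      exact Hset_conj_subset g hgm ν C.symm f hfg N
    · rw [hν]
      exact Hset_conj_subset f hfm μ C g hg N
  constructor
  · apply limsup_congr
    filter_upwards with N
    rw [key N]
  · apply liminf_congr
    filter_upwards with N
    rw [key N]
end
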